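/- arXiv:2510.14649 — 2 statements merged into one kernel-verified Lean document; each statement's English description precedes it below -/
import Mathlib

section
/- Water-filling optimality: for positive reals λ_1 ≥ λ_2 ≥ … ≥ λ_G and constant κ > 0, consider maximizing ∑_g λ_g² x_g / (x_g + κ) subject to x_g ≥ 0 and ∑_g x_g = 1. At the optimum there exists ζ > 0 such that x_g = κ(ζ λ_g − 1)⁺ with ∑_g κ(ζ λ_g − 1)⁺ = 1, and this choice satisfies the KKT conditions of this concave maximization problem. -/
open Finset

lemma wf_concave (l κ s t : ℝ) (hκ : 0 < κ) (hs : 0 ≤ s) (ht : 0 ≤ t) :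
    l ^ 2 * t / (t + κ) ≤ l ^ 2 * s / (s + κ) + (l ^ 2 * κ / (s + κ) ^ 2) * (t - s) := by
  have h1 : 0 < t + κ := by linarith
  have h2 : 0 < s + κ := by linarith
  have h3 : l ^ 2 * t / (t + κ) = l ^ 2 * s / (s + κ) + l ^ 2 * κ * (t - s) / ((t + κ) * (s + κ)) := by
    field_simp
    ring
  rw [h3]
  have h4 : (l ^ 2 * κ / (s + κ) ^ 2) * (t - s) - l ^ 2 * κ * (t - s) / ((t + κ) * (s + κ)) =
      l ^ 2 * κ * (t - s) ^ 2 / ((s + κ) ^ 2 * (t + κ)) := by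
    field_simp
    ring
  nlinarith [div_nonneg (by positivity : (0:ℝ) ≤ l ^ 2 * κ * (t - s) ^ 2)
    (by positivity : (0:ℝ) ≤ (s + κ) ^ 2 * (t + κ))]

/-- Water-filling optimality: for positive `λ_1 ≥ … ≥ λ_G` and `κ > 0`, there
exists `ζ > 0` such that the water-filling point `x_g = κ(ζλ_g − 1)⁺` lies on
the simplex (`∑_g x_g = 1`) and globally maximizes
`∑_g λ_g² x_g/(x_g + κ)` over the simplex. -/
theorem water_filling_optimal {G : ℕ} (hG : 0 < G)
    (lam : Fin G → ℝ) (hpos : ∀ g, 0 < lam g)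
    (hsorted : Antitone lam) (κ : ℝ) (hκ : 0 < κ) :
    ∃ ζ : ℝ, 0 < ζ ∧
      (∑ g, κ * max (ζ * lam g - 1) 0) = 1 ∧
      ∀ y : Fin G → ℝ, (∀ g, 0 ≤ y g) → (∑ g, y g) = 1 →
        (∑ g, (lam g) ^ 2 * y g / (y g + κ)) ≤
        ∑ g, (lam g) ^ 2 * (κ * max (ζ * lam g - 1) 0) /
          (κ * max (ζ * lam g - 1) 0 + κ) := by
  set g0 : Fin G := ⟨0, hG⟩ with hg0
  have hl0 : 0 < lam g0 := hpos _
  set F : ℝ → ℝ := fun z => ∑ g, κ * max (z * lam g - 1) 0 with hF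
  have hcont : Continuous F := by
    apply continuous_finset_sum
    intro g _
    exact continuous_const.mul (((continuous_id.mul continuous_const).sub
      continuous_const).max continuous_const)
  set a := 1 / lam g0 with ha
  set b := (1 + 1 / κ) / lam g0 with hb
  have hab : a ≤ b := by
    rw [ha, hb, div_le_div_iff₀ hl0 hl0]
    nlinarith [one_div_pos.mpr hκ]
  have hFa : F a = 0 := by
    apply Finset.sum_eq_zero
    intro g _
    have hle : lam g ≤ lam g0 := hsorted (show g0 ≤ g from Fin.mk_le_of_le_val (Nat.zero_le _))
    have h1 : a * lam g ≤ 1 := by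
      rw [ha, div_mul_eq_mul_div, one_mul, div_le_one hl0]
      exact hle
    rw [max_eq_right (sub_nonpos.mpr h1), mul_zero]
  have hFb : 1 ≤ F b := by
    have hterm : κ * max (b * lam g0 - 1) 0 = 1 := by
      have hbl : b * lam g0 = 1 + 1 / κ := by
        rw [hb, div_mul_cancel₀ _ hl0.ne']
      rw [hbl, max_eq_left (by nlinarith [one_div_pos.mpr hκ])]
      field_simp
      ring
    calc (1:ℝ) = κ * max (b * lam g0 - 1) 0 := hterm.symm
      _ ≤ F b := Finset.single_le_sum (f := fun g => κ * max (b * lam g - 1) 0)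
          (fun g _ => by positivity) (Finset.mem_univ g0)
  obtain ⟨ζ, hζmem, hζeq⟩ := intermediate_value_Icc hab hcont.continuousOn
    (Set.mem_Icc.mpr ⟨hFa.le.trans zero_le_one, hFb⟩)
  have hζpos : 0 < ζ := lt_of_lt_of_le (by positivity) hζmem.1
  refine ⟨ζ, hζpos, hζeq, ?_⟩
  intro y hy hysum
  set x : Fin G → ℝ := fun g => κ * max (ζ * lam g - 1) 0 with hx
  have hxnn : ∀ g, 0 ≤ x g := fun g => by positivity
  set μ := 1 / (κ * ζ ^ 2) with hμ
  have key : ∀ g, lam g ^ 2 * y g / (y g + κ) ≤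
      lam g ^ 2 * x g / (x g + κ) + μ * (y g - x g) := by
    intro g
    have hc := wf_concave (lam g) κ (x g) (y g) hκ (hxnn g) (hy g)
    have hstep : (lam g ^ 2 * κ / (x g + κ) ^ 2) * (y g - x g) ≤ μ * (y g - x g) := by
      rcases le_or_gt (ζ * lam g) 1 with hle | hgt
      · have hx0 : x g = 0 := by
          show κ * max (ζ * lam g - 1) 0 = 0
          rw [max_eq_right (sub_nonpos.mpr hle), mul_zero]
        have hsq : (ζ * lam g) * (ζ * lam g) ≤ 1 := by
          nlinarith [mul_pos hζpos (hpos g)]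
        have hcoef : lam g ^ 2 * κ / (x g + κ) ^ 2 ≤ μ := by
          rw [hx0, zero_add, hμ, div_le_div_iff₀ (by positivity) (by positivity)]
          nlinarith [sq_nonneg κ, hκ]
        have hyx : 0 ≤ y g - x g := by rw [hx0]; simpa using hy g
        exact mul_le_mul_of_nonneg_right hcoef hyx
      · have hxκ : x g + κ = κ * (ζ * lam g) := by
          show κ * max (ζ * lam g - 1) 0 + κ = _
          rw [max_eq_left (by linarith)]
          ring
        have heq : lam g ^ 2 * κ / (x g + κ) ^ 2 = μ := by
          have h1 := (hpos g).ne'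
          have h2 := hζpos.ne'
          have h3 := hκ.ne'
          rw [hxκ, hμ]
          field_simp
        rw [heq]
    linarith
  calc (∑ g, lam g ^ 2 * y g / (y g + κ))
      ≤ ∑ g, (lam g ^ 2 * x g / (x g + κ) + μ * (y g - x g)) :=
        Finset.sum_le_sum (fun g _ => key g)
    _ = (∑ g, lam g ^ 2 * x g / (x g + κ)) + μ * ((∑ g, y g) - (∑ g, x g)) := by
        rw [Finset.sum_add_distrib, ← Finset.mul_sum, Finset.sum_sub_distrib]
    _ = ∑ g, lam g ^ 2 * x g / (x g + κ) := by
        rw [hysum, show (∑ g, x g) = 1 from hζeq]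
        ring
end

section
/- Trace maximization over unitary alignment: for Hermitian positive semidefinite P ∈ ℂ^{n×n} and a diagonal matrix Λ̃ ∈ ℂ^{n×n} with nonnegative diagonal entries sorted in descending order, the maximum over unitary V of tr(P V Λ̃ Vᴴ) equals ∑_i μ_i λ̃_i, where μ_1 ≥ … ≥ μ_n are the eigenvalues of P and λ̃_1 ≥ … ≥ λ̃_n are the diagonal entries of Λ̃, attained when V's columns are eigenvectors of P ordered accordingly. -/
open Matrix
open Finset


lemma swap4 (n : ℕ) (X : ℕ → ℕ → ℕ → ℕ → ℝ) :
    ∑ i ∈ range n, ∑ j ∈ range n, ∑ k ∈ range n, ∑ l ∈ range n, X i j k l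
    = ∑ k ∈ range n, ∑ l ∈ range n, ∑ i ∈ range n, ∑ j ∈ range n, X i j k l :=
  calc ∑ i ∈ range n, ∑ j ∈ range n, ∑ k ∈ range n, ∑ l ∈ range n, X i j k l
      = ∑ i ∈ range n, ∑ k ∈ range n, ∑ j ∈ range n, ∑ l ∈ range n, X i j k l :=
        Finset.sum_congr rfl fun _ _ => Finset.sum_comm
    _ = ∑ k ∈ range n, ∑ i ∈ range n, ∑ j ∈ range n, ∑ l ∈ range n, X i j k l :=
        Finset.sum_comm
    _ = ∑ k ∈ range n, ∑ i ∈ range n, ∑ l ∈ range n, ∑ j ∈ range n, X i j k l :=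
        Finset.sum_congr rfl fun _ _ => Finset.sum_congr rfl fun _ _ => Finset.sum_comm
    _ = ∑ k ∈ range n, ∑ l ∈ range n, ∑ i ∈ range n, ∑ j ∈ range n, X i j k l :=
        Finset.sum_congr rfl fun _ _ => Finset.sum_comm

lemma count_le (n m : ℕ) (hm : m < n) :
    ∑ i ∈ Finset.range n, (if i ≤ m then (1:ℝ) else 0) = ((m + 1 : ℕ) : ℝ) := by
  rw [Finset.sum_ite, Finset.sum_const_zero, add_zero, Finset.sum_const,
    nsmul_eq_mul, mul_one]
  have h : (Finset.range n).filter (fun i => i ≤ m) = Finset.range (m+1) := by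
    ext x; simp; omega
  rw [h, Finset.card_range]

lemma abel_repr (n : ℕ) (f : ℕ → ℝ) (hf0 : ∀ k, n ≤ k → f k = 0) (i : ℕ) :
    f i = ∑ k ∈ Finset.range n, if i ≤ k then f k - f (k+1) else 0 := by
  by_cases hi : i < n
  · rw [Finset.sum_ite, Finset.sum_const_zero, add_zero]
    have h1 : (Finset.range n).filter (fun k => i ≤ k) = Finset.Ico i n := by
      ext x; simp [Finset.mem_Ico]; omega
    rw [h1, Finset.sum_Ico_eq_sub _ (le_of_lt hi), Finset.sum_range_sub' f,
      Finset.sum_range_sub' f, hf0 n le_rfl]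
    ring
  · rw [hf0 i (by omega)]
    symm
    apply Finset.sum_eq_zero
    intro k hk
    simp only [Finset.mem_range] at hk
    rw [if_neg (by omega)]

lemma core_ineq (n : ℕ) (f g : ℕ → ℝ) (s : ℕ → ℕ → ℝ)
    (hf : Antitone f) (hf0 : ∀ k, n ≤ k → f k = 0)
    (hg : Antitone g) (hg0 : ∀ k, n ≤ k → g k = 0)
    (hs : ∀ i j, 0 ≤ s i j)
    (hrow : ∀ i ∈ Finset.range n, ∑ j ∈ Finset.range n, s i j = 1)
    (hcol : ∀ j ∈ Finset.range n, ∑ i ∈ Finset.range n, s i j = 1) :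
    ∑ i ∈ Finset.range n, ∑ j ∈ Finset.range n, f i * g j * s i j ≤
      ∑ i ∈ Finset.range n, f i * g i := by
  set a : ℕ → ℝ := fun k => f k - f (k+1) with ha_def
  set b : ℕ → ℝ := fun l => g l - g (l+1) with hb_def
  have ha : ∀ k, 0 ≤ a k := fun k => sub_nonneg.2 (hf (Nat.le_succ k))
  have hb : ∀ l, 0 ≤ b l := fun l => sub_nonneg.2 (hg (Nat.le_succ l))
  set T : ℕ → ℕ → ℝ := fun k l => ∑ i ∈ Finset.range n, ∑ j ∈ Finset.range n,
    (if i ≤ k ∧ j ≤ l then s i j else 0) with hT_def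
  have h1 : ∀ i j : ℕ, f i * g j * s i j =
      ∑ k ∈ Finset.range n, ∑ l ∈ Finset.range n,
        a k * b l * (if i ≤ k ∧ j ≤ l then s i j else 0) := by
    intro i j
    rw [abel_repr n f hf0 i, abel_repr n g hg0 j, Finset.sum_mul_sum,
      Finset.sum_mul]
    apply Finset.sum_congr rfl
    intro k _
    rw [Finset.sum_mul]
    apply Finset.sum_congr rfl
    intro l _
    split_ifs <;> first | (exfalso; omega) | ring1
  have hL : ∑ i ∈ Finset.range n, ∑ j ∈ Finset.range n, f i * g j * s i j
      = ∑ k ∈ Finset.range n, ∑ l ∈ Finset.range n, a k * b l * T k l := by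
    simp only [h1]
    rw [swap4]
    apply Finset.sum_congr rfl; intro k _
    apply Finset.sum_congr rfl; intro l _
    simp only [hT_def, Finset.mul_sum]
  have hR : ∑ i ∈ Finset.range n, f i * g i
      = ∑ k ∈ Finset.range n, ∑ l ∈ Finset.range n,
          a k * b l * ((min k l + 1 : ℕ) : ℝ) := by
    have h2 : ∀ i : ℕ, f i * g i =
        ∑ k ∈ Finset.range n, ∑ l ∈ Finset.range n,
          a k * b l * (if i ≤ min k l then (1:ℝ) else 0) := by
      intro i
      rw [abel_repr n f hf0 i, abel_repr n g hg0 i, Finset.sum_mul_sum]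
      apply Finset.sum_congr rfl
      intro k _
      apply Finset.sum_congr rfl
      intro l _
      split_ifs <;> first | (exfalso; omega) | ring1
    simp only [h2]
    rw [Finset.sum_comm]
    apply Finset.sum_congr rfl; intro k hk
    rw [Finset.sum_comm]
    apply Finset.sum_congr rfl; intro l hl
    rw [← Finset.mul_sum]
    congr 1
    simp only [Finset.mem_range] at hk hl
    exact count_le n (min k l) (by omega)
  have hT : ∀ k ∈ Finset.range n, ∀ l ∈ Finset.range n,
      T k l ≤ ((min k l + 1 : ℕ) : ℝ) := by
    intro k hk l hl
    simp only [Finset.mem_range] at hk hl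
    have hb1 : T k l ≤ ((k + 1 : ℕ) : ℝ) := by
      have hstep : T k l ≤ ∑ i ∈ Finset.range n, (if i ≤ k then (1:ℝ) else 0) := by
        apply Finset.sum_le_sum
        intro i _
        by_cases hik : i ≤ k
        · rw [if_pos hik]
          calc ∑ j ∈ Finset.range n, (if i ≤ k ∧ j ≤ l then s i j else 0)
              ≤ ∑ j ∈ Finset.range n, s i j := by
                apply Finset.sum_le_sum
                intro j _
                split_ifs
                · exact le_rfl
                · exact hs i j
            _ = 1 := hrow i (Finset.mem_range.2 (by omega))
        · rw [if_neg hik]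
          exact le_of_eq (Finset.sum_eq_zero fun j _ => if_neg fun h => hik h.1)
      rw [count_le n k hk] at hstep
      exact hstep
    have hb2 : T k l ≤ ((l + 1 : ℕ) : ℝ) := by
      have hcomm : T k l = ∑ j ∈ Finset.range n, ∑ i ∈ Finset.range n,
          (if i ≤ k ∧ j ≤ l then s i j else 0) := Finset.sum_comm
      rw [hcomm]
      have hstep : ∑ j ∈ Finset.range n, ∑ i ∈ Finset.range n,
          (if i ≤ k ∧ j ≤ l then s i j else 0)
          ≤ ∑ j ∈ Finset.range n, (if j ≤ l then (1:ℝ) else 0) := by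
        apply Finset.sum_le_sum
        intro j _
        by_cases hjl : j ≤ l
        · rw [if_pos hjl]
          calc ∑ i ∈ Finset.range n, (if i ≤ k ∧ j ≤ l then s i j else 0)
              ≤ ∑ i ∈ Finset.range n, s i j := by
                apply Finset.sum_le_sum
                intro i _
                split_ifs
                · exact le_rfl
                · exact hs i j
            _ = 1 := hcol j (Finset.mem_range.2 (by omega))
        · rw [if_neg hjl]
          exact le_of_eq (Finset.sum_eq_zero fun i _ => if_neg fun h => hjl h.2)
      rw [count_le n l hl] at hstep
      exact hstep
    rcases le_total k l with h | h
    · rw [min_eq_left h]; exact hb1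
    · rw [min_eq_right h]; exact hb2
  rw [hL, hR]
  apply Finset.sum_le_sum
  intro k hk
  apply Finset.sum_le_sum
  intro l hl
  exact mul_le_mul_of_nonneg_left (hT k hk l hl) (mul_nonneg (ha k) (hb l))

lemma row_sum_one {n : ℕ} (U : Matrix (Fin n) (Fin n) ℂ)
    (hU : U ∈ Matrix.unitaryGroup (Fin n) ℂ) (i : Fin n) :
    ∑ j, Complex.normSq (U i j) = 1 := by
  have h := Matrix.mem_unitaryGroup_iff.1 hU
  have h2 := congrArg (fun M => M i i) h
  simp only [Matrix.star_eq_conjTranspose, Matrix.mul_apply,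
    Matrix.conjTranspose_apply, Matrix.one_apply_eq] at h2
  have h3 : ∀ j, U i j * star (U i j) = ((Complex.normSq (U i j) : ℝ) : ℂ) := by
    intro j; rw [Complex.star_def, Complex.mul_conj]
  rw [Finset.sum_congr rfl (fun j _ => h3 j)] at h2
  exact_mod_cast h2

lemma col_sum_one {n : ℕ} (U : Matrix (Fin n) (Fin n) ℂ)
    (hU : U ∈ Matrix.unitaryGroup (Fin n) ℂ) (j : Fin n) :
    ∑ i, Complex.normSq (U i j) = 1 := by
  have h := Matrix.mem_unitaryGroup_iff'.1 hU
  have h2 := congrArg (fun M => M j j) h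
  simp only [Matrix.star_eq_conjTranspose, Matrix.mul_apply,
    Matrix.conjTranspose_apply, Matrix.one_apply_eq] at h2
  have h3 : ∀ i, star (U i j) * U i j = ((Complex.normSq (U i j) : ℝ) : ℂ) := by
    intro i; rw [Complex.star_def, mul_comm, Complex.mul_conj]
  rw [Finset.sum_congr rfl (fun i _ => h3 i)] at h2
  exact_mod_cast h2

lemma trace_formula {n : ℕ} (μ lt : Fin n → ℝ) (U : Matrix (Fin n) (Fin n) ℂ) :
    (Matrix.diagonal (fun i => (μ i : ℂ)) * U * Matrix.diagonal (fun i => (lt i : ℂ)) * Uᴴ).trace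
    = ((∑ i, ∑ j, μ i * lt j * Complex.normSq (U i j) : ℝ) : ℂ) := by
  rw [Matrix.trace]
  push_cast
  apply Finset.sum_congr rfl; intro i _
  rw [Matrix.diag_apply, Matrix.mul_apply]
  apply Finset.sum_congr rfl; intro j _
  rw [Matrix.mul_diagonal, Matrix.diagonal_mul, Matrix.conjTranspose_apply]
  rw [show (μ i : ℂ) * U i j * (lt j : ℂ) * star (U i j)
      = (μ i : ℂ) * (lt j : ℂ) * (U i j * star (U i j)) by ring]
  rw [Complex.star_def, Complex.mul_conj]

lemma trace_reduction {n : ℕ} (P V W : Matrix (Fin n) (Fin n) ℂ) (μ lt : Fin n → ℝ)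
    (hspec : P = W * Matrix.diagonal (fun i => (μ i : ℂ)) * Wᴴ) :
    (P * V * Matrix.diagonal (fun i => (lt i : ℂ)) * Vᴴ).trace
    = (Matrix.diagonal (fun i => (μ i : ℂ)) * (Wᴴ * V) *
        Matrix.diagonal (fun i => (lt i : ℂ)) * (Wᴴ * V)ᴴ).trace := by
  rw [hspec, Matrix.trace_mul_comm, Matrix.trace_mul_comm _ ((Wᴴ * V)ᴴ)]
  congr 1
  simp only [Matrix.conjTranspose_mul, Matrix.conjTranspose_conjTranspose,
    Matrix.mul_assoc]


/-- Ruhe trace inequality with attainment: for Hermitian PSD `P` with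
eigenvalues `μ_1 ≥ … ≥ μ_n` (spectral decomposition `P = W diag(μ) Wᴴ` with
`W` unitary) and a diagonal matrix `Λ̃ = diag(λ̃)` with
`λ̃_1 ≥ … ≥ λ̃_n ≥ 0`, the maximum of `tr(P V Λ̃ Vᴴ)` over unitary `V` equals
`∑_i μ_i λ̃_i`, attained when the columns of `V` are eigenvectors of `P`
ordered accordingly. -/
theorem trace_maximization_unitary {n : ℕ}
    (P : Matrix (Fin n) (Fin n) ℂ)
    (μ : Fin n → ℝ) (W : Matrix (Fin n) (Fin n) ℂ)
    (hW : W ∈ Matrix.unitaryGroup (Fin n) ℂ)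
    (hspec : P = W * Matrix.diagonal (fun i => (μ i : ℂ)) * Wᴴ)
    (hμ_sorted : Antitone μ) (hμ_nonneg : ∀ i, 0 ≤ μ i)
    (lt : Fin n → ℝ) (hlt_sorted : Antitone lt) (hlt_nonneg : ∀ i, 0 ≤ lt i) :
    (∀ V ∈ Matrix.unitaryGroup (Fin n) ℂ,
        (P * V * Matrix.diagonal (fun i => (lt i : ℂ)) * Vᴴ).trace.re ≤
          ∑ i, μ i * lt i) ∧
    (∃ V ∈ Matrix.unitaryGroup (Fin n) ℂ,
        (P * V * Matrix.diagonal (fun i => (lt i : ℂ)) * Vᴴ).trace.re =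
          ∑ i, μ i * lt i) := by
  -- extensions to ℕ
  set F : ℕ → ℝ := fun k => if h : k < n then μ ⟨k, h⟩ else 0 with hF_def
  set G : ℕ → ℝ := fun k => if h : k < n then lt ⟨k, h⟩ else 0 with hG_def
  have hF_anti : Antitone F := by
    intro x y hxy
    simp only [hF_def]
    by_cases hy : y < n
    · rw [dif_pos hy, dif_pos (lt_of_le_of_lt hxy hy)]
      exact hμ_sorted hxy
    · rw [dif_neg hy]
      by_cases hx : x < n
      · rw [dif_pos hx]; exact hμ_nonneg _
      · rw [dif_neg hx]
  have hG_anti : Antitone G := by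
    intro x y hxy
    simp only [hG_def]
    by_cases hy : y < n
    · rw [dif_pos hy, dif_pos (lt_of_le_of_lt hxy hy)]
      exact hlt_sorted hxy
    · rw [dif_neg hy]
      by_cases hx : x < n
      · rw [dif_pos hx]; exact hlt_nonneg _
      · rw [dif_neg hx]
  have hF0 : ∀ k, n ≤ k → F k = 0 := by
    intro k hk; simp only [hF_def]; rw [dif_neg (by omega)]
  have hG0 : ∀ k, n ≤ k → G k = 0 := by
    intro k hk; simp only [hG_def]; rw [dif_neg (by omega)]
  have hRHS : ∑ i, μ i * lt i = ∑ i ∈ Finset.range n, F i * G i := by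
    rw [← Fin.sum_univ_eq_sum_range (fun i => F i * G i) n]
    apply Finset.sum_congr rfl
    intro i _
    simp only [hF_def, hG_def, dif_pos i.isLt, Fin.eta]
  constructor
  · -- inequality
    intro V hV
    set U : Matrix (Fin n) (Fin n) ℂ := Wᴴ * V with hU_def
    have hUmem : U ∈ Matrix.unitaryGroup (Fin n) ℂ := by
      rw [hU_def, ← Matrix.star_eq_conjTranspose]
      exact mul_mem (Unitary.star_mem hW) hV
    have htr : (P * V * Matrix.diagonal (fun i => (lt i : ℂ)) * Vᴴ).trace.re
        = ∑ i, ∑ j, μ i * lt j * Complex.normSq (U i j) := by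
      rw [trace_reduction P V W μ lt hspec, ← hU_def, trace_formula μ lt U,
        Complex.ofReal_re]
    rw [htr, hRHS]
    set S : ℕ → ℕ → ℝ := fun i j =>
      if h : i < n ∧ j < n then Complex.normSq (U ⟨i, h.1⟩ ⟨j, h.2⟩) else 0 with hS_def
    have hconv : ∑ i, ∑ j, μ i * lt j * Complex.normSq (U i j)
        = ∑ i ∈ Finset.range n, ∑ j ∈ Finset.range n, F i * G j * S i j := by
      rw [← Fin.sum_univ_eq_sum_range
        (fun i => ∑ j ∈ Finset.range n, F i * G j * S i j) n]
      apply Finset.sum_congr rfl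
      intro i _
      rw [← Fin.sum_univ_eq_sum_range (fun j => F ↑i * G j * S ↑i j) n]
      apply Finset.sum_congr rfl
      intro j _
      simp only [hF_def, hG_def, hS_def, dif_pos i.isLt, dif_pos j.isLt,
        dif_pos (And.intro i.isLt j.isLt), Fin.eta]
    rw [hconv]
    apply core_ineq n F G S hF_anti hF0 hG_anti hG0
    · intro i j
      simp only [hS_def]
      split_ifs
      · exact Complex.normSq_nonneg _
      · exact le_rfl
    · intro i hi
      simp only [Finset.mem_range] at hi
      rw [← Fin.sum_univ_eq_sum_range (fun j => S i j) n]
      have : ∀ j : Fin n, S i ↑j = Complex.normSq (U ⟨i, hi⟩ j) := by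
        intro j
        simp only [hS_def, dif_pos (And.intro hi j.isLt), Fin.eta]
      rw [Finset.sum_congr rfl (fun j _ => this j)]
      exact row_sum_one U hUmem ⟨i, hi⟩
    · intro j hj
      simp only [Finset.mem_range] at hj
      rw [← Fin.sum_univ_eq_sum_range (fun i => S i j) n]
      have : ∀ i : Fin n, S ↑i j = Complex.normSq (U i ⟨j, hj⟩) := by
        intro i
        simp only [hS_def, dif_pos (And.intro i.isLt hj), Fin.eta]
      rw [Finset.sum_congr rfl (fun i _ => this i)]
      exact col_sum_one U hUmem ⟨j, hj⟩
  · -- attainment at V = W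
    refine ⟨W, hW, ?_⟩
    have hU1 : Wᴴ * W = 1 := by
      rw [← Matrix.star_eq_conjTranspose]
      exact Matrix.mem_unitaryGroup_iff'.1 hW
    rw [trace_reduction P W W μ lt hspec, hU1]
    rw [trace_formula μ lt 1, Complex.ofReal_re]
    have : ∀ i : Fin n, ∑ j, μ i * lt j * Complex.normSq ((1 : Matrix (Fin n) (Fin n) ℂ) i j)
        = μ i * lt i := by
      intro i
      rw [Fintype.sum_eq_single i]
      · rw [Matrix.one_apply_eq]; simp
      · intro j hj
        rw [Matrix.one_apply_ne' hj]
        simp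
    rw [Finset.sum_congr rfl (fun i _ => this i)]
end
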